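/- arXiv:1805.10678 — 4 statements merged into one kernel-verified Lean document; each statement's English description precedes it below -/
import Mathlib

section
/- Let C be an n×n real symmetric matrix, L₁ ≥ 0 with ‖2C x₁ − 2C x₂‖ ≤ L₁‖x₁ − x₂‖ for all x₁, x₂, and L_H ≥ 0 with −L_H I ⪯ 2C. Suppose sequences x^k, y^k, μ^k ⊂ ℝⁿ and ρ^k > 0 with ρ^{k+1} = α ρ^k, α > 0, satisfy the ADMM updates: y^{k+1} minimizes y ↦ ‖x^k − y + μ^k/ρ^k‖² over y ∈ {−1,1}ⁿ; x^{k+1} minimizes x ↦ xᵀCx + (ρ^k/2)‖x − y^{k+1} + μ^k/ρ^k‖² over ℝⁿ; and μ^{k+1} = μ^k + ρ^k(x^{k+1} − y^{k+1}). If for every k one has ρ^k > L_H and (ρ^k)² − L_H ρ^k − (α+1)L₁² > 0, then the augmented Lagrangian monotonically decreases: L(x^{k+1}, y^{k+1}; μ^{k+1}; ρ^{k+1}) − L(x^k, y^k; μ^k; ρ^k) ≤ −c₁^k ‖x^{k+1} − x^k‖², where c₁^k = (ρ^k − L_H)/2 − (α+1)L₁²/(2ρ^k) > 0. -/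
/-- Euclidean norm of a vector in `ℝⁿ`. -/
noncomputable def vnorm {n : ℕ} (x : Fin n → ℝ) : ℝ := Real.sqrt (∑ i, (x i) ^ 2)

/-- Euclidean inner product on `ℝⁿ`. -/
def vdot {n : ℕ} (x y : Fin n → ℝ) : ℝ := ∑ i, x i * y i

/-- Vector-form augmented Lagrangian `L(x,y;μ;ρ) = xᵀCx + ⟨μ, x−y⟩ + (ρ/2)‖x−y‖²`. -/
noncomputable def lagr {n : ℕ} (C : Matrix (Fin n) (Fin n) ℝ) (x y μ : Fin n → ℝ)
    (ρ : ℝ) : ℝ :=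
  vdot x (C.mulVec x) + vdot μ (x - y) + ρ / 2 * vnorm (x - y) ^ 2

/-!
One ADMM step moves `L` in three stages. Completing the square shows that `L` depends on `y` only
through `‖x − y + μ/ρ‖²`, so the `y`-step does not increase it (for `k ≥ 1`, `y^k` is itself
a candidate). The `x`-objective is
`(ρ − L_H)`-strongly convex and `x^{k+1}` is its stationary point, so the `x`-step lowers `L` by at
least `(ρ − L_H)/2 ‖x^{k+1} − x^k‖²`. The multiplier and penalty update raises `L` by exactly
`(α + 1)/(2ρ) ‖μ^{k+1} − μ^k‖²`. Stationarity of the `x`-step gives `μ^{j+1} = −2Cx^{j+1}` for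
every `j`, hence for `k ≥ 1` the Lipschitz bound on `2C` gives
`‖μ^{k+1} − μ^k‖ ≤ L₁ ‖x^{k+1} − x^k‖`.
-/

open Matrix

theorem eq_zero_of_forall_nonneg_mul_add_sq {a s : ℝ} (h : ∀ t : ℝ, 0 ≤ t * a + t ^ 2 * s) :
    a = 0 := by
  have hmin : IsLocalMin (fun t : ℝ => t * a + t ^ 2 * s) 0 :=
    Filter.Eventually.of_forall fun t => by simpa using h t
  have hderiv : HasDerivAt (fun t : ℝ => t * a + t ^ 2 * s) (1 * a + (2 * 0 ^ 1) * s) 0 :=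
    ((hasDerivAt_id 0).mul_const a).add ((hasDerivAt_pow 2 0).mul_const s)
  simpa using hmin.hasDerivAt_eq_zero hderiv

section

variable {n : ℕ}

theorem vnorm_sq (v : Fin n → ℝ) : vnorm v ^ 2 = v ⬝ᵥ v := by
  rw [vnorm, Real.sq_sqrt (by positivity)]
  simp only [dotProduct, sq]

theorem vnorm_neg (v : Fin n → ℝ) : vnorm (-v) = vnorm v := by
  simp only [vnorm, Pi.neg_apply, neg_sq]

theorem vnorm_sub_add_sq (x y c : Fin n → ℝ) :
    vnorm (x - y + c) ^ 2 = (x - (y - c)) ⬝ᵥ (x - (y - c)) := by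
  rw [vnorm_sq, sub_sub_eq_add_sub, sub_add_eq_add_sub]

theorem neg_mul_dotProduct_self_le_dotProduct_mulVec {C : Matrix (Fin n) (Fin n) ℝ} {L_H : ℝ}
    (hHess : ((2 : ℝ) • C + L_H • (1 : Matrix (Fin n) (Fin n) ℝ)).PosSemidef) (e : Fin n → ℝ) :
    -(L_H / 2) * (e ⬝ᵥ e) ≤ e ⬝ᵥ (C *ᵥ e) := by
  have h := hHess.dotProduct_mulVec_nonneg e
  simp only [star_trivial, add_mulVec, smul_mulVec, one_mulVec, dotProduct_add,
    dotProduct_smul, smul_eq_mul] at h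
  linarith

-- The objective of the `x`-subproblem, with `b = y − μ/ρ`.
noncomputable def penalizedQuad (C : Matrix (Fin n) (Fin n) ℝ) (r : ℝ) (b w : Fin n → ℝ) : ℝ :=
  w ⬝ᵥ (C *ᵥ w) + r / 2 * ((w - b) ⬝ᵥ (w - b))

variable {C : Matrix (Fin n) (Fin n) ℝ} {r : ℝ} {b u : Fin n → ℝ}

theorem penalizedQuad_add_smul (hC : C.IsSymm) (r : ℝ) (b u d : Fin n → ℝ) (t : ℝ) :
    penalizedQuad C r b (u + t • d) = penalizedQuad C r b u
      + t * (((2 : ℝ) • (C *ᵥ u) + r • (u - b)) ⬝ᵥ d) + t ^ 2 * penalizedQuad C r 0 d := by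
  have hsymm : d ⬝ᵥ (C *ᵥ u) = u ⬝ᵥ (C *ᵥ d) := by
    rw [dotProduct_mulVec, ← mulVec_transpose, hC.eq, dotProduct_comm]
  have hshift : u + t • d - b = (u - b) + t • d := by abel
  simp only [penalizedQuad, hshift, sub_zero, mulVec_add, mulVec_smul, add_dotProduct,
    dotProduct_add, smul_dotProduct, dotProduct_smul, smul_eq_mul, hsymm,
    dotProduct_comm d (u - b), dotProduct_comm (C *ᵥ u) d]
  ring

theorem gradient_eq_zero_of_isMinimizer (hC : C.IsSymm)
    (hmin : ∀ w, penalizedQuad C r b u ≤ penalizedQuad C r b w) :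
    (2 : ℝ) • (C *ᵥ u) + r • (u - b) = 0 := by
  set g := (2 : ℝ) • (C *ᵥ u) + r • (u - b)
  refine dotProduct_self_eq_zero.1 (eq_zero_of_forall_nonneg_mul_add_sq (s := penalizedQuad C r 0 g) fun t => ?_)
  have := hmin (u + t • g)
  rw [penalizedQuad_add_smul hC] at this
  linarith

theorem penalizedQuad_add_le_of_isMinimizer (hC : C.IsSymm) {L_H : ℝ}
    (hHess : ((2 : ℝ) • C + L_H • (1 : Matrix (Fin n) (Fin n) ℝ)).PosSemidef)
    (hmin : ∀ w, penalizedQuad C r b u ≤ penalizedQuad C r b w) (w : Fin n → ℝ) :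
    penalizedQuad C r b u + (r - L_H) / 2 * ((u - w) ⬝ᵥ (u - w)) ≤ penalizedQuad C r b w := by
  have hexp := penalizedQuad_add_smul hC r b u (w - u) 1
  rw [gradient_eq_zero_of_isMinimizer hC hmin, one_smul, add_sub_cancel] at hexp
  have hcurv : (r - L_H) / 2 * ((w - u) ⬝ᵥ (w - u)) ≤ penalizedQuad C r 0 (w - u) := by
    rw [penalizedQuad, sub_zero]
    linarith [neg_mul_dotProduct_self_le_dotProduct_mulVec hHess (w - u)]
  rw [← neg_sub w u, neg_dotProduct_neg]
  simp only [zero_dotProduct, mul_zero, add_zero, one_pow, one_mul] at hexp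
  linarith

variable {C : Matrix (Fin n) (Fin n) ℝ} {x x' y y' μ : Fin n → ℝ} {ρ : ℝ}

-- Completing the square.
theorem lagr_eq_penalizedQuad (hρ : ρ ≠ 0) :
    lagr C x y μ ρ = penalizedQuad C ρ (y - ρ⁻¹ • μ) x - μ ⬝ᵥ μ / (2 * ρ) := by
  have hshift : x - (y - ρ⁻¹ • μ) = (x - y) + ρ⁻¹ • μ := by abel
  rw [lagr, penalizedQuad, hshift, vnorm_sq]
  simp only [vdot, ← dotProduct.eq_1, add_dotProduct, dotProduct_add, smul_dotProduct,
    dotProduct_smul, smul_eq_mul, dotProduct_comm (x - y) μ]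
  field_simp
  ring

theorem lagr_le_lagr_of_vnorm_le (hρ : 0 < ρ)
    (h : vnorm (x - y' + ρ⁻¹ • μ) ^ 2 ≤ vnorm (x - y + ρ⁻¹ • μ) ^ 2) :
    lagr C x y' μ ρ ≤ lagr C x y μ ρ := by
  rw [vnorm_sub_add_sq, vnorm_sub_add_sq] at h
  rw [lagr_eq_penalizedQuad hρ.ne', lagr_eq_penalizedQuad hρ.ne', penalizedQuad, penalizedQuad]
  gcongr

theorem lagr_add_le_of_isMinimizer (hC : C.IsSymm) {L_H : ℝ}
    (hHess : ((2 : ℝ) • C + L_H • (1 : Matrix (Fin n) (Fin n) ℝ)).PosSemidef) (hρ : ρ ≠ 0)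
    (hmin : ∀ w, penalizedQuad C ρ (y - ρ⁻¹ • μ) x' ≤ penalizedQuad C ρ (y - ρ⁻¹ • μ) w) :
    lagr C x' y μ ρ + (ρ - L_H) / 2 * vnorm (x' - x) ^ 2 ≤ lagr C x y μ ρ := by
  rw [lagr_eq_penalizedQuad hρ, lagr_eq_penalizedQuad hρ, vnorm_sq]
  linarith [penalizedQuad_add_le_of_isMinimizer hC hHess hmin x]

theorem add_smul_sub_eq_neg_of_isMinimizer (hC : C.IsSymm) (hρ : ρ ≠ 0)
    (hmin : ∀ w, penalizedQuad C ρ (y - ρ⁻¹ • μ) x ≤ penalizedQuad C ρ (y - ρ⁻¹ • μ) w) :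
    μ + ρ • (x - y) = -((2 : ℝ) • (C *ᵥ x)) := by
  have hgrad := gradient_eq_zero_of_isMinimizer hC hmin
  rw [sub_sub_eq_add_sub, add_sub_right_comm, smul_add, smul_inv_smul₀ hρ] at hgrad
  rw [eq_neg_iff_add_eq_zero, ← hgrad]
  abel

theorem lagr_add_smul_sub_mul (α : ℝ) :
    lagr C x y (μ + ρ • (x - y)) (α * ρ)
      = lagr C x y μ ρ + (α + 1) / (2 * ρ) * vnorm (ρ • (x - y)) ^ 2 := by
  rw [lagr, lagr, vnorm_sq, vnorm_sq]
  simp only [vdot, ← dotProduct.eq_1, add_dotProduct, smul_dotProduct, dotProduct_smul,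
    smul_eq_mul]
  rcases eq_or_ne ρ 0 with rfl | hρ
  · simp
  · field_simp
    ring

end

theorem stmt3_general {n : ℕ} (C : Matrix (Fin n) (Fin n) ℝ) (hC : C.IsSymm)
    (L1 L_H α : ℝ) (hα : 0 < α)
    (hLip : ∀ x₁ x₂ : Fin n → ℝ,
      vnorm ((2 : ℝ) • C.mulVec x₁ - (2 : ℝ) • C.mulVec x₂) ≤ L1 * vnorm (x₁ - x₂))
    (hHess : ((2 : ℝ) • C + L_H • (1 : Matrix (Fin n) (Fin n) ℝ)).PosSemidef)
    (x y μ : ℕ → Fin n → ℝ) (ρ : ℕ → ℝ)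
    (hρpos : ∀ k, 0 < ρ k) (hρupd : ∀ k, ρ (k + 1) = α * ρ k)
    -- y-update: `y^{k+1}` minimizes `y ↦ ‖x^k − y + μ^k/ρ^k‖²` over `y ∈ {−1,1}ⁿ`
    (hy : ∀ k, (∀ i, y (k + 1) i = 1 ∨ y (k + 1) i = -1) ∧
      ∀ w : Fin n → ℝ, (∀ i, w i = 1 ∨ w i = -1) →
        vnorm (x k - y (k + 1) + (ρ k)⁻¹ • μ k) ^ 2
          ≤ vnorm (x k - w + (ρ k)⁻¹ • μ k) ^ 2)
    -- x-update: `x^{k+1}` minimizes `x ↦ xᵀCx + (ρ^k/2)‖x − y^{k+1} + μ^k/ρ^k‖²` over `ℝⁿ`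
    (hx : ∀ k, ∀ w : Fin n → ℝ,
      vdot (x (k + 1)) (C.mulVec (x (k + 1)))
          + ρ k / 2 * vnorm (x (k + 1) - y (k + 1) + (ρ k)⁻¹ • μ k) ^ 2
        ≤ vdot w (C.mulVec w) + ρ k / 2 * vnorm (w - y (k + 1) + (ρ k)⁻¹ • μ k) ^ 2)
    -- dual update
    (hμ : ∀ k, μ (k + 1) = μ k + ρ k • (x (k + 1) - y (k + 1)))
    (hquad : ∀ k, (ρ k) ^ 2 - L_H * ρ k - (α + 1) * L1 ^ 2 > 0) :
    ∀ k, 1 ≤ k →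
      0 < (ρ k - L_H) / 2 - (α + 1) * L1 ^ 2 / (2 * ρ k) ∧
      lagr C (x (k + 1)) (y (k + 1)) (μ (k + 1)) (ρ (k + 1))
          - lagr C (x k) (y k) (μ k) (ρ k)
        ≤ -(((ρ k - L_H) / 2 - (α + 1) * L1 ^ 2 / (2 * ρ k))
            * vnorm (x (k + 1) - x k) ^ 2) := by
  have hxmin k w : penalizedQuad C (ρ k) (y (k + 1) - (ρ k)⁻¹ • μ k) (x (k + 1))
      ≤ penalizedQuad C (ρ k) (y (k + 1) - (ρ k)⁻¹ • μ k) w := by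
    have h := hx k w
    rwa [vnorm_sub_add_sq, vnorm_sub_add_sq] at h
  have hdual k : μ (k + 1) = -((2 : ℝ) • (C *ᵥ x (k + 1))) := by
    rw [hμ]
    exact add_smul_sub_eq_neg_of_isMinimizer hC (hρpos k).ne' (hxmin k)
  intro k hk
  obtain ⟨j, rfl⟩ : ∃ j, k = j + 1 := ⟨k - 1, by omega⟩
  set k := j + 1
  have hρ := hρpos k
  refine ⟨?_, ?_⟩
  · rw [show (ρ k - L_H) / 2 - (α + 1) * L1 ^ 2 / (2 * ρ k)
        = (ρ k ^ 2 - L_H * ρ k - (α + 1) * L1 ^ 2) / (2 * ρ k) by field_simp]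
    exact div_pos (hquad k) (by positivity)
  have hystep := lagr_le_lagr_of_vnorm_le (C := C) hρ ((hy k).2 (y k) (hy j).1)
  have hxstep := lagr_add_le_of_isMinimizer hC hHess hρ.ne' (hxmin k) (x := x k)
  have hμstep : lagr C (x (k + 1)) (y (k + 1)) (μ (k + 1)) (ρ (k + 1))
      = lagr C (x (k + 1)) (y (k + 1)) (μ k) (ρ k)
        + (α + 1) / (2 * ρ k) * vnorm (ρ k • (x (k + 1) - y (k + 1))) ^ 2 := by
    rw [hμ, hρupd k]
    exact lagr_add_smul_sub_mul α
  have hμdiff :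
      vnorm (ρ k • (x (k + 1) - y (k + 1))) ^ 2 ≤ L1 ^ 2 * vnorm (x (k + 1) - x k) ^ 2 := by
    have hdiff : ρ k • (x (k + 1) - y (k + 1))
        = -((2 : ℝ) • (C *ᵥ x (k + 1)) - (2 : ℝ) • (C *ᵥ x k)) := by
      rw [eq_sub_of_add_eq' (hμ k).symm, hdual k, hdual j]
      abel
    rw [hdiff, vnorm_neg, ← mul_pow]
    exact pow_le_pow_left₀ (Real.sqrt_nonneg _) (hLip _ _) 2
  have hμdiff' := mul_le_mul_of_nonneg_left hμdiff (by positivity : 0 ≤ (α + 1) / (2 * ρ k))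
  linear_combination hμstep + hxstep + hystep + hμdiff'

/-- monotone decrease of the augmented Lagrangian along the vector-form ADMM
iterates: `L^{k+1} − L^k ≤ −c₁^k ‖x^{k+1} − x^k‖²` with
`c₁^k = (ρ^k − L_H)/2 − (α+1)L₁²/(2ρ^k) > 0`. -/
theorem stmt3 {n : ℕ} (C : Matrix (Fin n) (Fin n) ℝ) (hC : C.IsSymm)
    (L1 L_H α : ℝ) (hL1 : 0 ≤ L1) (hLH : 0 ≤ L_H) (hα : 0 < α)
    (hLip : ∀ x₁ x₂ : Fin n → ℝ,
      vnorm ((2 : ℝ) • C.mulVec x₁ - (2 : ℝ) • C.mulVec x₂) ≤ L1 * vnorm (x₁ - x₂))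
    (hHess : ((2 : ℝ) • C + L_H • (1 : Matrix (Fin n) (Fin n) ℝ)).PosSemidef)
    (x y μ : ℕ → Fin n → ℝ) (ρ : ℕ → ℝ)
    (hρpos : ∀ k, 0 < ρ k) (hρupd : ∀ k, ρ (k + 1) = α * ρ k)
    -- y-update: `y^{k+1}` minimizes `y ↦ ‖x^k − y + μ^k/ρ^k‖²` over `y ∈ {−1,1}ⁿ`
    (hy : ∀ k, (∀ i, y (k + 1) i = 1 ∨ y (k + 1) i = -1) ∧
      ∀ w : Fin n → ℝ, (∀ i, w i = 1 ∨ w i = -1) →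
        vnorm (x k - y (k + 1) + (ρ k)⁻¹ • μ k) ^ 2
          ≤ vnorm (x k - w + (ρ k)⁻¹ • μ k) ^ 2)
    -- x-update: `x^{k+1}` minimizes `x ↦ xᵀCx + (ρ^k/2)‖x − y^{k+1} + μ^k/ρ^k‖²` over `ℝⁿ`
    (hx : ∀ k, ∀ w : Fin n → ℝ,
      vdot (x (k + 1)) (C.mulVec (x (k + 1)))
          + ρ k / 2 * vnorm (x (k + 1) - y (k + 1) + (ρ k)⁻¹ • μ k) ^ 2
        ≤ vdot w (C.mulVec w) + ρ k / 2 * vnorm (w - y (k + 1) + (ρ k)⁻¹ • μ k) ^ 2)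
    -- dual update
    (hμ : ∀ k, μ (k + 1) = μ k + ρ k • (x (k + 1) - y (k + 1)))
    (hρLH : ∀ k, L_H < ρ k)
    (hquad : ∀ k, (ρ k) ^ 2 - L_H * ρ k - (α + 1) * L1 ^ 2 > 0) :
    ∀ k, 1 ≤ k →
      0 < (ρ k - L_H) / 2 - (α + 1) * L1 ^ 2 / (2 * ρ k) ∧
      lagr C (x (k + 1)) (y (k + 1)) (μ (k + 1)) (ρ (k + 1))
          - lagr C (x k) (y k) (μ k) (ρ k)
        ≤ -(((ρ k - L_H) / 2 - (α + 1) * L1 ^ 2 / (2 * ρ k))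
            * vnorm (x (k + 1) - x k) ^ 2) :=
  stmt3_general C hC L1 L_H α hα hLip hHess x y μ ρ hρpos hρupd hy hx hμ hquad
end

section
/- Let C be an n×n real symmetric matrix and L₁ ≥ 0 with ‖2C x₁ − 2C x₂‖ ≤ L₁‖x₁ − x₂‖ for all x₁, x₂. Suppose x, y, μ ∈ ℝⁿ and ρ ≥ L₁ satisfy 2Cx + μ = 0 and y ∈ {−1,1}ⁿ. Then L(x, y; μ; ρ) ≥ yᵀCy + ((ρ − L₁)/2)‖x − y‖². In particular, L(x, y; μ; ρ) ≥ min_{z ∈ {−1,1}ⁿ} zᵀCz, so the augmented Lagrangian along any ADMM trajectory with 2Cx^k + μ^k = 0, y^k ∈ {−1,1}ⁿ and ρ^k ≥ L₁ is bounded below. -/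
open Matrix

lemma Matrix.IsSymm.dotProduct_mulVec_comm {ι R : Type*} [Fintype ι] [CommSemiring R]
    {C : Matrix ι ι R} (hC : C.IsSymm) (a b : ι → R) : a ⬝ᵥ C *ᵥ b = b ⬝ᵥ C *ᵥ a := by
  rw [dotProduct_mulVec, ← mulVec_transpose, hC.eq, dotProduct_comm]

lemma Matrix.IsSymm.dotProduct_mulVec_sub_self {ι R : Type*} [Fintype ι] [CommRing R]
    {C : Matrix ι ι R} (hC : C.IsSymm) (x d : ι → R) :
    (x - d) ⬝ᵥ C *ᵥ (x - d) = x ⬝ᵥ C *ᵥ x - 2 * (d ⬝ᵥ C *ᵥ x) + d ⬝ᵥ C *ᵥ d := by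
  rw [mulVec_sub, sub_dotProduct, dotProduct_sub, dotProduct_sub, hC.dotProduct_mulVec_comm x d]
  ring

lemma vdot_eq_dotProduct {n : ℕ} (x y : Fin n → ℝ) : vdot x y = x ⬝ᵥ y := rfl

lemma vdot_le_vnorm_mul_vnorm {n : ℕ} (a b : Fin n → ℝ) : vdot a b ≤ vnorm a * vnorm b :=
  Real.sum_mul_le_sqrt_mul_sqrt _ _ _

lemma lagr_eq_of_stationary {n : ℕ} {C : Matrix (Fin n) (Fin n) ℝ} (hC : C.IsSymm)
    {x μ : Fin n → ℝ} (hstat : (2 : ℝ) • C *ᵥ x + μ = 0) (y : Fin n → ℝ) (ρ : ℝ) :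
    lagr C x y μ ρ =
      vdot y (C *ᵥ y) - vdot (x - y) (C *ᵥ (x - y)) + ρ / 2 * vnorm (x - y) ^ 2 := by
  have hμ : μ = -((2 : ℝ) • C *ᵥ x) := eq_neg_of_add_eq_zero_right hstat
  have hy : y = x - (x - y) := (sub_sub_cancel x y).symm
  simp only [lagr, vdot_eq_dotProduct]
  conv_rhs => rw [hy, hC.dotProduct_mulVec_sub_self, sub_sub_cancel]
  rw [hμ, neg_dotProduct, smul_dotProduct, dotProduct_comm (C *ᵥ x), smul_eq_mul]
  ring

lemma vdot_mulVec_self_le {n : ℕ} {C : Matrix (Fin n) (Fin n) ℝ} {L : ℝ} {d : Fin n → ℝ}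
    (h : vnorm ((2 : ℝ) • C *ᵥ d) ≤ L * vnorm d) : vdot d (C *ᵥ d) ≤ L / 2 * vnorm d ^ 2 := by
  have : 2 * vdot d (C *ᵥ d) ≤ L * vnorm d ^ 2 :=
    calc 2 * vdot d (C *ᵥ d) = vdot d ((2 : ℝ) • C *ᵥ d) := by
          simp only [vdot_eq_dotProduct, dotProduct_smul, smul_eq_mul]
      _ ≤ vnorm d * vnorm ((2 : ℝ) • C *ᵥ d) := vdot_le_vnorm_mul_vnorm _ _
      _ ≤ vnorm d * (L * vnorm d) := mul_le_mul_of_nonneg_left h (Real.sqrt_nonneg _)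
      _ = L * vnorm d ^ 2 := by ring
  linarith

lemma finite_setOf_forall_eq_or_eq {ι α : Type*} [Finite ι] (a b : α) :
    {z : ι → α | ∀ i, z i = a ∨ z i = b}.Finite :=
  (Set.Finite.pi fun _ => Set.toFinite {a, b}).subset fun _ hz i _ => hz i

theorem stmt4_general {n : ℕ} (C : Matrix (Fin n) (Fin n) ℝ) (hC : C.IsSymm)
    (L1 : ℝ)
    (hLip : ∀ x₁ x₂ : Fin n → ℝ,
      vnorm ((2 : ℝ) • C.mulVec x₁ - (2 : ℝ) • C.mulVec x₂) ≤ L1 * vnorm (x₁ - x₂))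
    (x y μ : Fin n → ℝ) (ρ : ℝ) (hρ : L1 ≤ ρ)
    (hstat : (2 : ℝ) • C.mulVec x + μ = 0)
    (hy : ∀ i, y i = 1 ∨ y i = -1) :
    lagr C x y μ ρ ≥ vdot y (C.mulVec y) + (ρ - L1) / 2 * vnorm (x - y) ^ 2 ∧
    lagr C x y μ ρ ≥
      sInf {v : ℝ | ∃ z : Fin n → ℝ, (∀ i, z i = 1 ∨ z i = -1) ∧ v = vdot z (C.mulVec z)} := by
  have hquad : vdot (x - y) (C *ᵥ (x - y)) ≤ L1 / 2 * vnorm (x - y) ^ 2 := by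
    apply vdot_mulVec_self_le
    simpa only [mulVec_sub, smul_sub] using hLip x y
  have hbound : lagr C x y μ ρ ≥ vdot y (C *ᵥ y) + (ρ - L1) / 2 * vnorm (x - y) ^ 2 := by
    rw [lagr_eq_of_stationary hC hstat]
    linarith
  refine ⟨hbound, ?_⟩
  have hfin := (finite_setOf_forall_eq_or_eq (ι := Fin n) (1 : ℝ) (-1)).image
    fun z => vdot z (C *ᵥ z)
  have hmin : sInf {v : ℝ | ∃ z : Fin n → ℝ, (∀ i, z i = 1 ∨ z i = -1) ∧ v = vdot z (C *ᵥ z)}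
      ≤ vdot y (C *ᵥ y) :=
    csInf_le (hfin.subset (by rintro _ ⟨z, hz, rfl⟩; exact ⟨z, hz, rfl⟩)).bddBelow ⟨y, hy, rfl⟩
  nlinarith [sq_nonneg (vnorm (x - y))]

/-- if `2Cx + μ = 0`, `y ∈ {−1,1}ⁿ` and `ρ ≥ L₁`, then
`L(x,y;μ;ρ) ≥ yᵀCy + ((ρ−L₁)/2)‖x−y‖²`; in particular `L(x,y;μ;ρ)` is bounded below by the
minimum of `zᵀCz` over `z ∈ {−1,1}ⁿ`. -/
theorem stmt4 {n : ℕ} (C : Matrix (Fin n) (Fin n) ℝ) (hC : C.IsSymm)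
    (L1 : ℝ) (hL1 : 0 ≤ L1)
    (hLip : ∀ x₁ x₂ : Fin n → ℝ,
      vnorm ((2 : ℝ) • C.mulVec x₁ - (2 : ℝ) • C.mulVec x₂) ≤ L1 * vnorm (x₁ - x₂))
    (x y μ : Fin n → ℝ) (ρ : ℝ) (hρ : L1 ≤ ρ)
    (hstat : (2 : ℝ) • C.mulVec x + μ = 0)
    (hy : ∀ i, y i = 1 ∨ y i = -1) :
    lagr C x y μ ρ ≥ vdot y (C.mulVec y) + (ρ - L1) / 2 * vnorm (x - y) ^ 2 ∧
    lagr C x y μ ρ ≥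
      sInf {v : ℝ | ∃ z : Fin n → ℝ, (∀ i, z i = 1 ∨ z i = -1) ∧ v = vdot z (C.mulVec z)} :=
  stmt4_general C hC L1 hLip x y μ ρ hρ hstat hy
end

section
/- Let N be a real p×q matrix and set λ = ‖N‖₂² (the square of its spectral norm). Then the symmetric block matrix H = [[I_p + NNᵀ, −N], [−Nᵀ, I_q]] is positive definite, and H ⪰ σ I with σ = 1 − (√(λ² + 4λ) − λ)/2 > 0; i.e., the smallest eigenvalue of H is at least 1 − (√(λ² + 4λ) − λ)/2. -/
open Matrix
open scoped Matrix.Norms.L2Operator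

/-!
Put `t = (√(λ² + 4λ) - λ) / 2`, the nonnegative root of `t² = (1 - t) λ`, so that `σ = 1 - t`
and `H - σ I = [[t I + N Nᴴ, -N], [-Nᴴ, t I]]`. For `t > 0` the Schur complement of the lower
right block is `t I - (t⁻¹ - 1) N Nᴴ ⪰ (t - (t⁻¹ - 1) λ) I = 0`, using `N Nᴴ ⪯ ‖N‖² I`; for
`t = 0` we have `N = 0`. Positive definiteness of `H` then follows from `σ > 0`, i.e. `t < 1`.
-/

namespace Matrix

variable {𝕜 m n : Type*} [RCLike 𝕜] [Fintype m] [Fintype n] [DecidableEq m]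

theorem star_dotProduct_self_eq_norm_sq (v : n → 𝕜) :
    star v ⬝ᵥ v = ((‖(EuclideanSpace.equiv n 𝕜).symm v‖ ^ 2 : ℝ) : 𝕜) := by
  rw [RCLike.ofReal_pow, ← inner_self_eq_norm_sq_to_K, EuclideanSpace.inner_eq_star_dotProduct,
    dotProduct_comm]
  rfl

theorem star_dotProduct_smul_one_sub_mul_conjTranspose_mulVec (c : ℝ) (A : Matrix m n 𝕜)
    (x : m → 𝕜) :
    star x ⬝ᵥ ((c • (1 : Matrix m m 𝕜) - A * Aᴴ) *ᵥ x)
      = c * (star x ⬝ᵥ x) - star (Aᴴ *ᵥ x) ⬝ᵥ (Aᴴ *ᵥ x) := by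
  rw [sub_mulVec, ← mulVec_mulVec, dotProduct_sub, dotProduct_mulVec _ A, star_mulVec,
    conjTranspose_conjTranspose, smul_mulVec, one_mulVec, dotProduct_smul,
    RCLike.real_smul_eq_coe_mul]

open scoped ComplexOrder in
theorem posSemidef_l2_opNorm_sq_smul_one_sub_mul_conjTranspose_self [DecidableEq n]
    (A : Matrix m n 𝕜) : (‖A‖ ^ 2 • (1 : Matrix m m 𝕜) - A * Aᴴ).PosSemidef := by
  refine .of_dotProduct_mulVec_nonneg
    ((IsHermitian.smul isHermitian_one (.all (‖A‖ ^ 2))).sub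
      (isHermitian_mul_conjTranspose_self A)) fun x => ?_
  have hAx := l2_opNorm_mulVec Aᴴ ((EuclideanSpace.equiv m 𝕜).symm x)
  rw [l2_opNorm_conjTranspose] at hAx
  rw [star_dotProduct_smul_one_sub_mul_conjTranspose_mulVec, star_dotProduct_self_eq_norm_sq,
    star_dotProduct_self_eq_norm_sq, ← RCLike.ofReal_mul, ← RCLike.ofReal_sub,
    RCLike.ofReal_nonneg, sub_nonneg, ← mul_pow]
  exact pow_le_pow_left₀ (norm_nonneg _) hAx 2

open scoped ComplexOrder in
theorem posSemidef_fromBlocks_smul_one_add_mul_conjTranspose [DecidableEq n] {t : ℝ}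
    (N : Matrix m n 𝕜) (ht₀ : 0 ≤ t) (ht₁ : t ≤ 1) (hN : (1 - t) * ‖N‖ ^ 2 ≤ t ^ 2) :
    (fromBlocks (t • 1 + N * Nᴴ) (-N) (-Nᴴ) (t • 1)).PosSemidef := by
  rcases ht₀.eq_or_lt with rfl | ht₀
  · have : N = 0 := by simpa using hN
    simpa [this] using PosSemidef.zero
  have hD : (t • 1 : Matrix n n 𝕜).PosDef := PosDef.one.smul ht₀
  have := hD.isUnit.invertible
  rw [← conjTranspose_neg, PosDef.fromBlocks₂₂ _ _ hD]
  have hc : 0 ≤ t⁻¹ - 1 := sub_nonneg.mpr ((one_le_inv₀ ht₀).mpr ht₁)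
  have hd : 0 ≤ t - (t⁻¹ - 1) * ‖N‖ ^ 2 := by
    have : (t⁻¹ - 1) * ‖N‖ ^ 2 = (1 - t) * ‖N‖ ^ 2 / t := by field_simp
    rw [this, sub_nonneg, div_le_iff₀ ht₀]
    linarith
  have hinv : (t • 1 : Matrix n n 𝕜)⁻¹ = t⁻¹ • 1 :=
    inv_eq_left_inv (by rw [smul_mul_smul_comm, inv_mul_cancel₀ ht₀.ne', one_smul, mul_one])
  have hschur : t • 1 + N * Nᴴ - (-N) * (t • 1 : Matrix n n 𝕜)⁻¹ * (-N)ᴴ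
      = (t⁻¹ - 1) • (‖N‖ ^ 2 • 1 - N * Nᴴ) + (t - (t⁻¹ - 1) * ‖N‖ ^ 2) • 1 := by
    rw [hinv, Matrix.neg_mul, Matrix.mul_smul, Matrix.mul_one, conjTranspose_neg, Matrix.mul_neg,
      Matrix.neg_mul, neg_neg, Matrix.smul_mul]
    module
  rw [hschur]
  exact ((posSemidef_l2_opNorm_sq_smul_one_sub_mul_conjTranspose_self N).smul hc).add
    (PosSemidef.one.smul hd)

end Matrix

theorem sqrt_sq_add_four_mul_sub_div_two_spec {lam : ℝ} (hlam : 0 ≤ lam) :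
    0 ≤ (√(lam ^ 2 + 4 * lam) - lam) / 2 ∧ (√(lam ^ 2 + 4 * lam) - lam) / 2 < 1 ∧
      (1 - (√(lam ^ 2 + 4 * lam) - lam) / 2) * lam = ((√(lam ^ 2 + 4 * lam) - lam) / 2) ^ 2 := by
  have hs : √(lam ^ 2 + 4 * lam) ^ 2 = lam ^ 2 + 4 * lam := Real.sq_sqrt (by positivity)
  have hs₀ := Real.sqrt_nonneg (lam ^ 2 + 4 * lam)
  refine ⟨?_, ?_, by linear_combination (-1/4 : ℝ) * hs⟩ <;> nlinarith

/-- for a real `p×q` matrix `N` with `λ = ‖N‖₂²` (square of the spectral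
norm), the block matrix `H = [[I + NNᵀ, −N], [−Nᵀ, I]]` is positive definite and satisfies
`H ⪰ σI` with `σ = 1 − (√(λ² + 4λ) − λ)/2 > 0`. -/
theorem stmt14 {p q : ℕ} (N : Matrix (Fin p) (Fin q) ℝ) (lam : ℝ)
    (hlam : lam = ‖N‖ ^ 2) :
    (fromBlocks (1 + N * Nᵀ) (-N) (-Nᵀ) 1).PosDef ∧
    0 < 1 - (Real.sqrt (lam ^ 2 + 4 * lam) - lam) / 2 ∧
    (fromBlocks (1 + N * Nᵀ) (-N) (-Nᵀ) 1
      - (1 - (Real.sqrt (lam ^ 2 + 4 * lam) - lam) / 2) • 1).PosSemidef := by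
  obtain ⟨ht₀, ht₁, hroot⟩ := sqrt_sq_add_four_mul_sub_div_two_spec (hlam ▸ sq_nonneg ‖N‖)
  set t := (√(lam ^ 2 + 4 * lam) - lam) / 2
  have hσ : 0 < 1 - t := by linarith
  have hshift : fromBlocks (1 + N * Nᵀ) (-N) (-Nᵀ) 1 - (1 - t) • 1
      = fromBlocks (t • 1 + N * Nᴴ) (-N) (-Nᴴ) (t • 1) := by
    rw [← fromBlocks_one, fromBlocks_smul, sub_eq_add_neg, fromBlocks_neg, fromBlocks_add,
      conjTranspose_eq_transpose_of_trivial]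
    congr 1 <;> module
  have hpsd : (fromBlocks (1 + N * Nᵀ) (-N) (-Nᵀ) 1 - (1 - t) • 1).PosSemidef :=
    hshift ▸ posSemidef_fromBlocks_smul_one_add_mul_conjTranspose N ht₀ ht₁.le
      (by rw [← hlam, hroot])
  refine ⟨?_, hσ, hpsd⟩
  simpa using (PosDef.one.smul hσ).add_posSemidef hpsd
end

section
/- Let Z, Λ₁ be n×n real matrices, X, Λ₂ be n×r real matrices, and ρ > 0. The unique minimizer over Y ∈ ℝ^{n×r} of Y ↦ ‖Z − XYᵀ + Λ₁/ρ‖_F² + ‖X − Y + Λ₂/ρ‖_F² is given in closed form by Y = ((1/ρ)(Λ₁ᵀX + Λ₂) + ZᵀX + X)(I + XᵀX)⁻¹, where I + XᵀX is positive definite and hence invertible. -/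
/-!
With `A = Z + Λ₁/ρ` and `B = X + Λ₂/ρ` the objective is `f Y = ‖A - XYᵀ‖² + ‖B - Y‖²`. The
closed form `Y₀` solves the normal equation `Y₀ (I + XᵀX) = AᵀX + B`, which says that the
cross term in `f (Y₀ + D)` vanishes, so `f (Y₀ + D) = f Y₀ + ‖XDᵀ‖² + ‖D‖² > f Y₀` for `D ≠ 0`.
-/

open Matrix

/-- Squared Frobenius norm. -/
def frobSq {n r : ℕ} (A : Matrix (Fin n) (Fin r) ℝ) : ℝ := ∑ i, ∑ j, (A i j) ^ 2

lemma frobSq_eq_trace {n r : ℕ} (A : Matrix (Fin n) (Fin r) ℝ) :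
    frobSq A = (Aᵀ * A).trace := by
  simp only [frobSq, trace, diag, mul_apply, transpose_apply]
  rw [Finset.sum_comm]
  simp only [sq]

lemma frobSq_nonneg {n r : ℕ} (A : Matrix (Fin n) (Fin r) ℝ) : 0 ≤ frobSq A :=
  Finset.sum_nonneg fun _ _ => Finset.sum_nonneg fun _ _ => sq_nonneg _

lemma frobSq_pos {n r : ℕ} {A : Matrix (Fin n) (Fin r) ℝ} (hA : A ≠ 0) : 0 < frobSq A := by
  refine (frobSq_nonneg A).lt_of_ne fun h => hA ?_
  rw [eq_comm, frobSq_eq_trace, ← conjTranspose_eq_transpose_of_trivial] at h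
  exact trace_conjTranspose_mul_self_eq_zero_iff.mp h

lemma frobSq_sub {n r : ℕ} (M N : Matrix (Fin n) (Fin r) ℝ) :
    frobSq (M - N) = frobSq M - 2 * (Mᵀ * N).trace + frobSq N := by
  have hsymm : (Nᵀ * M).trace = (Mᵀ * N).trace := by
    rw [← trace_transpose (Mᵀ * N), transpose_mul, transpose_transpose]
  simp only [frobSq_eq_trace, transpose_sub, Matrix.sub_mul, Matrix.mul_sub, trace_sub, hsymm]
  ring

def subproblemObjective {n r : ℕ} (A : Matrix (Fin n) (Fin n) ℝ)
    (X B Y : Matrix (Fin n) (Fin r) ℝ) : ℝ :=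
  frobSq (A - X * Yᵀ) + frobSq (B - Y)

lemma transpose_mul_add_eq_zero_of_mul_one_add {m k R : Type*} [Fintype m] [Fintype k]
    [DecidableEq k] [CommRing R] {A : Matrix m m R} {X B Y₀ : Matrix m k R}
    (h : Y₀ * (1 + Xᵀ * X) = Aᵀ * X + B) :
    (A - X * Y₀ᵀ)ᵀ * X + (B - Y₀) = 0 := by
  rw [Matrix.mul_add, Matrix.mul_one] at h
  rw [transpose_sub, transpose_mul, transpose_transpose, Matrix.sub_mul, Matrix.mul_assoc,
    ← sub_eq_zero.mpr h.symm]
  abel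

lemma subproblemObjective_add {n r : ℕ} {A : Matrix (Fin n) (Fin n) ℝ}
    {X B Y₀ : Matrix (Fin n) (Fin r) ℝ} (h : (A - X * Y₀ᵀ)ᵀ * X + (B - Y₀) = 0)
    (D : Matrix (Fin n) (Fin r) ℝ) :
    subproblemObjective A X B (Y₀ + D) =
      subproblemObjective A X B Y₀ + frobSq (X * Dᵀ) + frobSq D := by
  have hcross : ((A - X * Y₀ᵀ)ᵀ * (X * Dᵀ)).trace + ((B - Y₀)ᵀ * D).trace = 0 := by
    rw [← Matrix.mul_assoc, trace_mul_comm, ← trace_transpose ((B - Y₀)ᵀ * D),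
      transpose_mul, transpose_transpose, ← trace_add, ← Matrix.mul_add, h, Matrix.mul_zero,
      trace_zero]
  have hsplit₁ : A - X * (Y₀ + D)ᵀ = (A - X * Y₀ᵀ) - X * Dᵀ := by
    rw [transpose_add, Matrix.mul_add]; abel
  have hsplit₂ : B - (Y₀ + D) = (B - Y₀) - D := by abel
  simp only [subproblemObjective, hsplit₁, hsplit₂, frobSq_sub]
  linarith

lemma subproblemObjective_lt {n r : ℕ} {A : Matrix (Fin n) (Fin n) ℝ}
    {X B Y₀ Y : Matrix (Fin n) (Fin r) ℝ} (h : (A - X * Y₀ᵀ)ᵀ * X + (B - Y₀) = 0)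
    (hY : Y ≠ Y₀) :
    subproblemObjective A X B Y₀ < subproblemObjective A X B Y := by
  have hD : Y - Y₀ ≠ 0 := sub_ne_zero.mpr hY
  have := subproblemObjective_add h (Y - Y₀)
  rw [add_sub_cancel] at this
  linarith [frobSq_nonneg (X * (Y - Y₀)ᵀ), frobSq_pos hD]

theorem stmt18_general {n r : ℕ} (Z Λ1 : Matrix (Fin n) (Fin n) ℝ)
    (X Λ2 : Matrix (Fin n) (Fin r) ℝ) (ρ : ℝ) :
    ((1 : Matrix (Fin r) (Fin r) ℝ) + Xᵀ * X).PosDef ∧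
    IsUnit ((1 : Matrix (Fin r) (Fin r) ℝ) + Xᵀ * X) ∧
    (∀ Y : Matrix (Fin n) (Fin r) ℝ,
      Y ≠ ((1 / ρ) • (Λ1ᵀ * X + Λ2) + Zᵀ * X + X)
            * ((1 : Matrix (Fin r) (Fin r) ℝ) + Xᵀ * X)⁻¹ →
      frobSq (Z - X * (((1 / ρ) • (Λ1ᵀ * X + Λ2) + Zᵀ * X + X)
            * ((1 : Matrix (Fin r) (Fin r) ℝ) + Xᵀ * X)⁻¹)ᵀ + ρ⁻¹ • Λ1)
        + frobSq (X - ((1 / ρ) • (Λ1ᵀ * X + Λ2) + Zᵀ * X + X)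
            * ((1 : Matrix (Fin r) (Fin r) ℝ) + Xᵀ * X)⁻¹ + ρ⁻¹ • Λ2)
      < frobSq (Z - X * Yᵀ + ρ⁻¹ • Λ1) + frobSq (X - Y + ρ⁻¹ • Λ2)) := by
  have hS : ((1 : Matrix (Fin r) (Fin r) ℝ) + Xᵀ * X).PosDef :=
    PosDef.one.add_posSemidef (by simpa using posSemidef_conjTranspose_mul_self X)
  refine ⟨hS, hS.isUnit, fun Y hY => ?_⟩
  set A := Z + ρ⁻¹ • Λ1
  set B := X + ρ⁻¹ • Λ2
  have hnormal : ((1 / ρ) • (Λ1ᵀ * X + Λ2) + Zᵀ * X + X) * (1 + Xᵀ * X)⁻¹ * (1 + Xᵀ * X)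
      = Aᵀ * X + B := by
    rw [nonsing_inv_mul_cancel_right _ _ ((isUnit_iff_isUnit_det _).mp hS.isUnit)]
    simp only [A, B, transpose_add, transpose_smul, Matrix.add_mul, Matrix.smul_mul, one_div,
      smul_add]
    abel
  have hobjective : ∀ W, frobSq (Z - X * Wᵀ + ρ⁻¹ • Λ1) + frobSq (X - W + ρ⁻¹ • Λ2)
      = subproblemObjective A X B W := fun W => by
    simp only [subproblemObjective, A, B]
    congr 2 <;> abel
  rw [hobjective, hobjective]
  exact subproblemObjective_lt (transpose_mul_add_eq_zero_of_mul_one_add hnormal) hY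

/-- the Y-subproblem of the matrix-form ADMM,
`Y ↦ ‖Z − XYᵀ + Λ₁/ρ‖_F² + ‖X − Y + Λ₂/ρ‖_F²`, has the unique minimizer
`Y₀ = ((1/ρ)(Λ₁ᵀX + Λ₂) + ZᵀX + X)(I + XᵀX)⁻¹`, where `I + XᵀX` is positive definite
(hence invertible). -/
theorem stmt18 {n r : ℕ} (Z Λ1 : Matrix (Fin n) (Fin n) ℝ)
    (X Λ2 : Matrix (Fin n) (Fin r) ℝ) (ρ : ℝ) (hρ : 0 < ρ) :
    ((1 : Matrix (Fin r) (Fin r) ℝ) + Xᵀ * X).PosDef ∧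
    IsUnit ((1 : Matrix (Fin r) (Fin r) ℝ) + Xᵀ * X) ∧
    (∀ Y : Matrix (Fin n) (Fin r) ℝ,
      Y ≠ ((1 / ρ) • (Λ1ᵀ * X + Λ2) + Zᵀ * X + X)
            * ((1 : Matrix (Fin r) (Fin r) ℝ) + Xᵀ * X)⁻¹ →
      frobSq (Z - X * (((1 / ρ) • (Λ1ᵀ * X + Λ2) + Zᵀ * X + X)
            * ((1 : Matrix (Fin r) (Fin r) ℝ) + Xᵀ * X)⁻¹)ᵀ + ρ⁻¹ • Λ1)
        + frobSq (X - ((1 / ρ) • (Λ1ᵀ * X + Λ2) + Zᵀ * X + X)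
            * ((1 : Matrix (Fin r) (Fin r) ℝ) + Xᵀ * X)⁻¹ + ρ⁻¹ • Λ2)
      < frobSq (Z - X * Yᵀ + ρ⁻¹ • Λ1) + frobSq (X - Y + ρ⁻¹ • Λ2)) :=
  stmt18_general Z Λ1 X Λ2 ρ
end
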